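/- arXiv:1801.05669 — 5 statements merged into one kernel-verified Lean document; each statement's English description precedes it below -/
import Mathlib

section
/- Let p ≥ 1 be a natural number and let q be a real polynomial of degree at most p. Then there exists a unique function Q : ℝ^p → ℝ which is symmetric (Q(x ∘ σ) = Q(x) for every permutation σ of {1,…,p}), multiaffine (for each index i and each fixed choice of the other arguments, the map t ↦ Q(x₁,…,x_{i−1}, t, x_{i+1},…,x_p) is an affine function of t), and satisfies Q(ξ, ξ, …, ξ) = q(ξ) for all ξ ∈ ℝ. -/
/-!
A multiaffine function is determined by its values at the vertices `1_S` of the unit cube: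
`f x = ∑_S (∏_{i ∈ S} x i) (∏_{i ∉ S} (1 - x i)) f 1_S`. If `f` is moreover symmetric, `f 1_S`
depends only on `k = #S`, so on the diagonal `f` becomes the Bernstein expansion
`∑_k C(p, k) g_k ξ^k (1 - ξ)^(p - k)`, which vanishes identically only when every `g_k` does.
Applied to the difference of two blossoms this gives uniqueness. For existence, the coefficient of
`ξ^k` in `q` is spread evenly over the `C(p, k)` squarefree monomials of degree `k`.
-/

open Finset Polynomial
open scoped Pointwise

section Multiaffine

variable {ι R : Type*} [DecidableEq ι] [CommRing R]

def IsMultiaffine (f : (ι → R) → R) : Prop :=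
  ∀ (i : ι) (x : ι → R), ∃ a b : R, ∀ t : R, f (Function.update x i t) = a + b * t

theorem isMultiaffine_iff {f : (ι → R) → R} :
    IsMultiaffine f ↔ ∀ (i : ι) (x : ι → R) (t : R), f (Function.update x i t) =
      (1 - t) * f (Function.update x i 0) + t * f (Function.update x i 1) := by
  refine ⟨fun hf i x t => ?_, fun hf i x => ⟨f (Function.update x i 0),
    f (Function.update x i 1) - f (Function.update x i 0), fun t => by rw [hf]; ring⟩⟩
  obtain ⟨a, b, h⟩ := hf i x
  rw [h, h, h]
  ring

theorem IsMultiaffine.sub {f g : (ι → R) → R} (hf : IsMultiaffine f) (hg : IsMultiaffine g) :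
    IsMultiaffine (f - g) := by
  rw [isMultiaffine_iff] at *
  intro i x t
  simp only [Pi.sub_apply, hf i x t, hg i x t]
  ring

theorem IsMultiaffine.sum {α : Type*} (s : Finset α) {f : α → (ι → R) → R}
    (hf : ∀ a ∈ s, IsMultiaffine (f a)) : IsMultiaffine (fun x => ∑ a ∈ s, f a x) := by
  rw [isMultiaffine_iff]
  intro i x t
  rw [sum_congr rfl fun a ha => isMultiaffine_iff.mp (hf a ha) i x t, sum_add_distrib, mul_sum,
    mul_sum]

theorem isMultiaffine_const_mul_prod (c : R) (s : Finset ι) :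
    IsMultiaffine (fun x : ι → R => c * ∏ i ∈ s, x i) := by
  intro i x
  by_cases hi : i ∈ s
  · exact ⟨0, c * ∏ j ∈ s \ {i}, x j, fun t => by dsimp only; rw [prod_update_of_mem hi]; ring⟩
  · exact ⟨c * ∏ j ∈ s, x j, 0, fun t => by dsimp only; rw [prod_update_of_notMem hi]; ring⟩

theorem IsMultiaffine.eq_sum_powerset {f : (ι → R) → R} (hf : IsMultiaffine f) (x : ι → R)
    (u : Finset ι) :
    f x = ∑ S ∈ u.powerset,
      (∏ i ∈ S, x i) * (∏ i ∈ u \ S, (1 - x i)) * f (u.piecewise (S.piecewise 1 0) x) := by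
  induction u using Finset.induction_on with
  | empty => simp
  | @insert j s hj ih =>
    rw [sum_powerset_insert hj, ih, ← sum_add_distrib]
    refine sum_congr rfl fun S hS => ?_
    have hjS : j ∉ S := fun h => hj (mem_powerset.mp hS h)
    set y := s.piecewise (S.piecewise (1 : ι → R) 0) x
    have hsplit :
        f y = (1 - x j) * f (Function.update y j 0) + x j * f (Function.update y j 1) := by
      have := isMultiaffine_iff.mp hf j y (x j)
      rwa [Function.update_eq_self_iff.mpr (piecewise_eq_of_notMem _ _ _ hj).symm] at this
    have h0 : (insert j s).piecewise (S.piecewise (1 : ι → R) 0) x = Function.update y j 0 := by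
      rw [piecewise_insert, piecewise_eq_of_notMem _ _ _ hjS, Pi.zero_apply]
    have h1 : (insert j s).piecewise ((insert j S).piecewise (1 : ι → R) 0) x =
        Function.update y j 1 := by
      rw [piecewise_insert, piecewise_insert_self, Pi.one_apply]
      congr 1
      exact s.piecewise_congr
        (fun i hi => piecewise_insert_of_ne _ _ _ (ne_of_mem_of_not_mem hi hj)) fun _ _ => rfl
    rw [hsplit, h0, h1, insert_sdiff_of_notMem _ hjS,
      prod_insert (fun h => hj (mem_sdiff.mp h).1), prod_insert hjS,
      insert_sdiff_insert, sdiff_insert_of_notMem hj]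
    ring

theorem IsMultiaffine.eq_sum_vertices [Fintype ι] {f : (ι → R) → R} (hf : IsMultiaffine f)
    (x : ι → R) :
    f x = ∑ S : Finset ι, (∏ i ∈ S, x i) * (∏ i ∈ Sᶜ, (1 - x i)) * f (S.piecewise 1 0) := by
  simpa [compl_eq_univ_sdiff] using hf.eq_sum_powerset x univ

end Multiaffine

section Symmetric

variable {ι R : Type*} [DecidableEq ι] [Zero R] [One R]

theorem apply_piecewise_eq_of_card_eq {f : (ι → R) → R}
    (hf : ∀ (σ : Equiv.Perm ι) (x : ι → R), f (x ∘ σ) = f x) {S T : Finset ι} (h : #S = #T) :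
    f (S.piecewise 1 0) = f (T.piecewise 1 0) := by
  obtain ⟨σ, hσ⟩ := (Set.powersetCard.isPretransitive (α := ι) (n := #T)).exists_smul_eq
    (Set.powersetCard.ofCard h) (Set.powersetCard.ofCard rfl)
  have hST : σ • S = T := congrArg Subtype.val hσ
  rw [← hf σ (T.piecewise 1 0), ← hST]
  congr 1
  ext i
  simp [Finset.piecewise, ← Equiv.Perm.smul_def, Finset.smul_mem_smul_finset_iff]

theorem exists_apply_piecewise_eq_comp_card {f : (ι → R) → R}
    (hf : ∀ (σ : Equiv.Perm ι) (x : ι → R), f (x ∘ σ) = f x) :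
    ∃ g : ℕ → R, ∀ S : Finset ι, f (S.piecewise 1 0) = g #S :=
  have hfac : (fun S : Finset ι => f (S.piecewise 1 0)).FactorsThrough card :=
    fun _ _ => apply_piecewise_eq_of_card_eq hf
  ⟨Function.extend card (fun S => f (S.piecewise 1 0)) 0, fun S => (hfac.extend_apply 0 S).symm⟩

end Symmetric

-- The coefficient of `X ^ k` only sees the terms of index `≤ k`, whose coefficients vanish
-- inductively except that of index `k` itself.
theorem eq_zero_of_sum_C_mul_X_pow_mul_one_sub_X_pow_eq_zero {R : Type*} [CommRing R] {n : ℕ}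
    {c : ℕ → R} (h : ∑ k ∈ range (n + 1), C (c k) * X ^ k * (1 - X) ^ (n - k) = 0) :
    ∀ k ≤ n, c k = 0 := by
  intro k
  induction k using Nat.strong_induction_on with
  | _ k ih =>
    intro hk
    have hcoeff := congrArg (coeff · k) h
    simp only [finsetSum_coeff, coeff_zero] at hcoeff
    rw [sum_eq_single_of_mem k (mem_range.mpr (Nat.lt_succ_of_le hk))] at hcoeff
    · rw [mul_right_comm, coeff_mul_X_pow', if_pos le_rfl] at hcoeff
      simpa [coeff_zero_eq_eval_zero] using hcoeff
    · intro j _ hjk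
      rcases hjk.lt_or_gt with hlt | hgt
      · simp [ih j hlt (hlt.le.trans hk)]
      · rw [mul_right_comm, coeff_mul_X_pow', if_neg (not_le.mpr hgt)]

theorem sum_finset_apply_card {ι R : Type*} [Fintype ι] [Semiring R] (g : ℕ → R) :
    ∑ S : Finset ι, g #S =
      ∑ k ∈ range (Fintype.card ι + 1), ((Fintype.card ι).choose k : R) * g k := by
  rw [← powerset_univ, sum_powerset_apply_card, card_univ]
  simp only [nsmul_eq_mul]

section Blossom

variable {ι K : Type*} [Fintype ι] [Field K]

theorem IsMultiaffine.eq_zero_of_symmetric [DecidableEq ι] [CharZero K] {f : (ι → K) → K}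
    (hf : IsMultiaffine f)
    (hsymm : ∀ (σ : Equiv.Perm ι) (x : ι → K), f (x ∘ σ) = f x)
    (hdiag : ∀ ξ : K, f (fun _ => ξ) = 0) : f = 0 := by
  set n := Fintype.card ι
  obtain ⟨g, hg⟩ := exists_apply_piecewise_eq_comp_card hsymm
  have hbern :
      ∑ k ∈ range (n + 1), C ((n.choose k : K) * g k) * X ^ k * (1 - X) ^ (n - k) = 0 := by
    refine Polynomial.funext fun ξ => ?_
    simp only [eval_finsetSum, eval_mul, eval_C, eval_pow, eval_X, eval_sub, eval_one, eval_zero]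
    rw [← hdiag ξ, hf.eq_sum_vertices]
    simp only [prod_const, card_compl, hg]
    rw [sum_finset_apply_card fun k => ξ ^ k * (1 - ξ) ^ (n - k) * g k]
    exact sum_congr rfl fun k _ => by ring
  have hg0 : ∀ k ≤ n, g k = 0 := fun k hk =>
    (mul_eq_zero.mp (eq_zero_of_sum_C_mul_X_pow_mul_one_sub_X_pow_eq_zero hbern k hk)).resolve_left
      (by exact_mod_cast (Nat.choose_pos hk).ne')
  funext x
  rw [hf.eq_sum_vertices, Pi.zero_apply]
  exact sum_eq_zero fun S _ => by rw [hg, hg0 _ (card_le_univ S), mul_zero]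

theorem IsMultiaffine.eq_of_symmetric_of_diag [DecidableEq ι] [CharZero K] {f g : (ι → K) → K}
    (hf : IsMultiaffine f) (hg : IsMultiaffine g)
    (hfsymm : ∀ (σ : Equiv.Perm ι) (x : ι → K), f (x ∘ σ) = f x)
    (hgsymm : ∀ (σ : Equiv.Perm ι) (x : ι → K), g (x ∘ σ) = g x)
    (hdiag : ∀ ξ : K, f (fun _ => ξ) = g (fun _ => ξ)) : f = g :=
  sub_eq_zero.mp <| (hf.sub hg).eq_zero_of_symmetric (fun σ x => by simp [hfsymm, hgsymm])
    fun ξ => by simp [hdiag]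

noncomputable def blossom (q : K[X]) (x : ι → K) : K :=
  ∑ S : Finset ι, q.coeff #S / (Fintype.card ι).choose #S * ∏ i ∈ S, x i

theorem blossom_comp_perm (q : K[X]) (σ : Equiv.Perm ι) (x : ι → K) :
    blossom q (x ∘ σ) = blossom q x :=
  Fintype.sum_equiv σ.finsetCongr _ _ fun S => by
    simp [Equiv.finsetCongr_apply, card_map, prod_map]

theorem isMultiaffine_blossom [DecidableEq ι] (q : K[X]) : IsMultiaffine (blossom (ι := ι) q) :=
  IsMultiaffine.sum _ fun S _ => isMultiaffine_const_mul_prod _ S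

theorem blossom_const [CharZero K] (q : K[X]) (hq : q.natDegree ≤ Fintype.card ι) (ξ : K) :
    blossom q (fun _ : ι => ξ) = q.eval ξ := by
  rw [blossom, eval_eq_sum_range' (Nat.lt_succ_of_le hq)]
  simp only [prod_const]
  rw [sum_finset_apply_card (fun k => q.coeff k / (Fintype.card ι).choose k * ξ ^ k)]
  refine sum_congr rfl fun k hk => ?_
  have : ((Fintype.card ι).choose k : K) ≠ 0 := by
    exact_mod_cast (Nat.choose_pos (Nat.lt_succ_iff.mp (mem_range.mp hk))).ne'
  field_simp

end Blossom

theorem blossom_exists_unique_general (p : ℕ) (q : Polynomial ℝ)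
    (hq : q.natDegree ≤ p) :
    ∃! Q : (Fin p → ℝ) → ℝ,
      (∀ (σ : Equiv.Perm (Fin p)) (x : Fin p → ℝ), Q (x ∘ σ) = Q x) ∧
      (∀ (i : Fin p) (x : Fin p → ℝ), ∃ a b : ℝ,
        ∀ t : ℝ, Q (Function.update x i t) = a + b * t) ∧
      (∀ ξ : ℝ, Q (fun _ => ξ) = q.eval ξ) := by
  have hq' : q.natDegree ≤ Fintype.card (Fin p) := by rwa [Fintype.card_fin]
  refine ⟨blossom q, ⟨blossom_comp_perm q, isMultiaffine_blossom q, blossom_const q hq'⟩, ?_⟩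
  rintro Q ⟨hQsymm, hQaff, hQdiag⟩
  exact IsMultiaffine.eq_of_symmetric_of_diag hQaff (isMultiaffine_blossom q) hQsymm
    (blossom_comp_perm q) fun ξ => by rw [hQdiag, blossom_const q hq']

/-- **Existence and uniqueness of the blossom (polar form).**
Let `p ≥ 1` and let `q` be a real polynomial of degree at most `p`. Then there exists a
unique function `Q : ℝ^p → ℝ` which is symmetric, multiaffine, and whose diagonal is `q`. -/
theorem blossom_exists_unique (p : ℕ) (hp : 1 ≤ p) (q : Polynomial ℝ)
    (hq : q.natDegree ≤ p) :
    ∃! Q : (Fin p → ℝ) → ℝ,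
      (∀ (σ : Equiv.Perm (Fin p)) (x : Fin p → ℝ), Q (x ∘ σ) = Q x) ∧
      (∀ (i : Fin p) (x : Fin p → ℝ), ∃ a b : ℝ,
        ∀ t : ℝ, Q (Function.update x i t) = a + b * t) ∧
      (∀ ξ : ℝ, Q (fun _ => ξ) = q.eval ξ) :=
  blossom_exists_unique_general p q hq
end

section
/- Let p ≥ 1, let q be a real polynomial of degree at most p, and let Q : ℝ^p → ℝ be a symmetric multiaffine function with Q(ξ,…,ξ) = q(ξ) for all ξ ∈ ℝ. Then q = Σ_{ι=0}^{p} Q(e_ι) · b_{p,ι}, where e_ι ∈ ℝ^p denotes the vector having p−ι coordinates equal to 0 and ι coordinates equal to 1, and b_{p,ι}(ξ) = C(p,ι)·ξ^ι·(1−ξ)^{p−ι} is the Bernstein polynomial of degree p and index ι. -/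
/-!
Expanding `Q (ξ, …, ξ)` one coordinate at a time by multiaffinity, `t = (1 - t) • 0 + t • 1`,
gives `Σ_T ξ^#T (1 - ξ)^(p - #T) Q(𝟙_T)` over all subsets `T` of the coordinates. By symmetry
`Q(𝟙_T) = Q(e_{#T})`, and grouping the `C(p, k)` subsets of each size `k` gives the Bernstein form.
-/

open Finset Function
open scoped Pointwise

section Multiaffine

variable {ι R : Type*} [DecidableEq ι] [CommRing R] {Q : (ι → R) → R}

lemma apply_update_eq_of_affine
    (hQ : ∀ (i : ι) (x : ι → R), ∃ a b : R, ∀ t : R, Q (update x i t) = a + b * t)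
    (x : ι → R) (i : ι) (t : R) :
    Q (update x i t) = (1 - t) * Q (update x i 0) + t * Q (update x i 1) := by
  obtain ⟨a, b, h⟩ := hQ i x
  rw [h, h, h]
  ring

theorem multiaffine_apply_piecewise_eq_sum
    (hQ : ∀ (i : ι) (x : ι → R), ∃ a b : R, ∀ t : R, Q (update x i t) = a + b * t)
    (y x : ι → R) (S : Finset ι) :
    Q (S.piecewise y x) = ∑ T ∈ S.powerset,
      (∏ j ∈ T, y j) * (∏ j ∈ S \ T, (1 - y j)) * Q (S.piecewise (T.piecewise 1 0) x) := by
  induction S using Finset.induction_on generalizing x with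
  | empty => simp
  | @insert i S hi ih =>
    have hsplit (t : R) : S.piecewise y (update x i t) = update (S.piecewise y x) i t :=
      (S.update_piecewise_of_notMem y x hi t).symm
    rw [piecewise_insert, apply_update_eq_of_affine hQ, ← hsplit, ← hsplit, ih, ih,
      sum_powerset_insert hi, mul_sum, mul_sum]
    congr 1 <;> refine sum_congr rfl fun T hT => ?_
    · have hiT : i ∉ T := fun h => hi (mem_powerset.mp hT h)
      have hvertex : (insert i S).piecewise (T.piecewise (1 : ι → R) 0) x
          = S.piecewise (T.piecewise (1 : ι → R) 0) (update x i 0) := by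
        ext j; by_cases hj : j = i <;> simp [Finset.piecewise, update, hj, hi, hiT]
      rw [insert_sdiff_of_notMem _ hiT, prod_insert (fun h => hi (mem_sdiff.mp h).1), hvertex]
      ring
    · have hiT : i ∉ T := fun h => hi (mem_powerset.mp hT h)
      have hvertex : (insert i S).piecewise ((insert i T).piecewise (1 : ι → R) 0) x
          = S.piecewise (T.piecewise (1 : ι → R) 0) (update x i 1) := by
        ext j; by_cases hj : j = i <;> simp [Finset.piecewise, update, hj, hi, hiT]
      rw [insert_sdiff_insert, sdiff_insert_of_notMem hi, prod_insert hiT, hvertex]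
      ring

theorem multiaffine_apply_const_eq_sum [Fintype ι]
    (hQ : ∀ (i : ι) (x : ι → R), ∃ a b : R, ∀ t : R, Q (update x i t) = a + b * t) (ξ : R) :
    Q (fun _ => ξ) = ∑ T : Finset ι,
      ξ ^ #T * (1 - ξ) ^ (Fintype.card ι - #T) * Q (T.piecewise 1 0) := by
  have h := multiaffine_apply_piecewise_eq_sum hQ (fun _ => ξ) 0 univ
  simpa only [piecewise_univ, powerset_univ, prod_const, ← compl_eq_univ_sdiff, card_compl]
    using h

end Multiaffine

theorem symmetric_apply_piecewise_eq_of_card_eq {ι β γ : Type*} [DecidableEq ι]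
    {Q : (ι → β) → γ} (hQ : ∀ (σ : Equiv.Perm ι) (x : ι → β), Q (x ∘ σ) = Q x)
    {T T' : Finset ι} (h : #T = #T') (a b : β) :
    Q (T.piecewise (fun _ => a) (fun _ => b)) = Q (T'.piecewise (fun _ => a) (fun _ => b)) := by
  obtain ⟨σ, hσ⟩ := (Set.powersetCard.isPretransitive (α := ι) (n := #T')).exists_smul_eq
    ⟨T, h⟩ ⟨T', rfl⟩
  replace hσ : σ • T = T' := by simpa using congrArg Subtype.val hσ
  rw [← hσ, ← hQ σ ((σ • T).piecewise _ _)]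
  congr 1
  ext j
  simp [Finset.piecewise, ← Equiv.Perm.smul_def, smul_mem_smul_finset_iff]

theorem blossom_bernstein_control_points_general (p : ℕ) (q : Polynomial ℝ)
    (Q : (Fin p → ℝ) → ℝ)
    (hQsym : ∀ (σ : Equiv.Perm (Fin p)) (x : Fin p → ℝ), Q (x ∘ σ) = Q x)
    (hQaff : ∀ (i : Fin p) (x : Fin p → ℝ), ∃ a b : ℝ,
      ∀ t : ℝ, Q (Function.update x i t) = a + b * t)
    (hQdiag : ∀ ξ : ℝ, Q (fun _ => ξ) = q.eval ξ)
    (e : ℕ → Fin p → ℝ)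
    (he : ∀ (ι : ℕ) (j : Fin p), e ι j = if (j : ℕ) < ι then 1 else 0) :
    ∀ ξ : ℝ, q.eval ξ =
      ∑ ι ∈ Finset.range (p + 1),
        Q (e ι) * ((p.choose ι : ℝ) * ξ ^ ι * (1 - ξ) ^ (p - ι)) := by
  intro ξ
  have hvertex (T : Finset (Fin p)) : Q (T.piecewise 1 0) = Q (e #T) := by
    have hcard : #T = #{j : Fin p | (j : ℕ) < #T} := by
      rw [Fin.card_filter_val_lt, min_eq_right (by simpa using card_le_univ T)]
    have he_eq : e #T = ({j : Fin p | (j : ℕ) < #T} : Finset _).piecewise 1 0 := by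
      ext j
      simp [he, Finset.piecewise]
    rw [he_eq]
    exact symmetric_apply_piecewise_eq_of_card_eq hQsym hcard 1 0
  calc q.eval ξ
      = ∑ T ∈ (univ : Finset (Fin p)).powerset, ξ ^ #T * (1 - ξ) ^ (p - #T) * Q (e #T) := by
        simp only [← hQdiag, multiaffine_apply_const_eq_sum hQaff, Fintype.card_fin,
          powerset_univ, hvertex]
    _ = _ := by
        rw [sum_powerset_apply_card (fun k => ξ ^ k * (1 - ξ) ^ (p - k) * Q (e k)), card_univ,
          Fintype.card_fin]
        refine sum_congr rfl fun k _ => ?_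
        rw [nsmul_eq_mul]
        ring

/-- **Bernstein–Bézier control points from blossom values.**
If `Q : ℝ^p → ℝ` is the blossom of a polynomial `q` of degree at most `p`, then
`q(ξ) = Σ_{ι=0}^{p} Q(e_ι) · C(p,ι)·ξ^ι·(1-ξ)^{p-ι}`, where `e_ι ∈ ℝ^p` is the vector
with `ι` coordinates equal to `1` and `p-ι` coordinates equal to `0`. -/
theorem blossom_bernstein_control_points (p : ℕ) (hp : 1 ≤ p) (q : Polynomial ℝ)
    (hq : q.natDegree ≤ p)
    (Q : (Fin p → ℝ) → ℝ)
    (hQsym : ∀ (σ : Equiv.Perm (Fin p)) (x : Fin p → ℝ), Q (x ∘ σ) = Q x)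
    (hQaff : ∀ (i : Fin p) (x : Fin p → ℝ), ∃ a b : ℝ,
      ∀ t : ℝ, Q (Function.update x i t) = a + b * t)
    (hQdiag : ∀ ξ : ℝ, Q (fun _ => ξ) = q.eval ξ)
    (e : ℕ → Fin p → ℝ)
    (he : ∀ (ι : ℕ) (j : Fin p), e ι j = if (j : ℕ) < ι then 1 else 0) :
    ∀ ξ : ℝ, q.eval ξ =
      ∑ ι ∈ Finset.range (p + 1),
        Q (e ι) * ((p.choose ι : ℝ) * ξ ^ ι * (1 - ξ) ^ (p - ι)) :=
  blossom_bernstein_control_points_general p q Q hQsym hQaff hQdiag e he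
end

section
/- Let U ⊂ ℝ² be open, let φ : U → ℝ be continuously differentiable on U, and let F, F' : ℝ² → ℝ² be continuously differentiable maps whose images are contained in U and which agree on the line {0} × ℝ, i.e., F(0, ξ) = F'(0, ξ) for all ξ ∈ ℝ. Set g = φ ∘ F and g' = φ ∘ F'. Then for every ξ ∈ ℝ: det[∂₁F'(0, ξ), ∂₂F(0, ξ)]·∂₁g(0, ξ) − det[∂₁F(0, ξ), ∂₂F(0, ξ)]·∂₁g'(0, ξ) + det[∂₁F(0, ξ), ∂₁F'(0, ξ)]·∂₂g(0, ξ) = 0. -/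
/-!
By the chain rule, each of the three derivatives of `g` and `g'` is the differential
`L = Dφ(F(0, ξ))` applied to one of the tangent vectors `∂₁F(0, ξ)`, `∂₁F'(0, ξ)`, `∂₂F(0, ξ)`;
it is the same `L` for `g'` because `F'(0, ξ) = F(0, ξ)`. The claimed identity is then `L`
applied to the linear dependence `det[b, c] a − det[a, c] b + det[a, b] c = 0` of any three
vectors `a, b, c ∈ ℝ²` (Cramer's rule).
-/

/-- `det[a, b] = a₁b₂ - a₂b₁`, the determinant of the 2×2 matrix with columns `a` and `b`. -/
def det2 (a b : ℝ × ℝ) : ℝ := a.1 * b.2 - a.2 * b.1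

theorem det2_smul_sub_det2_smul_add_det2_smul (a b c : ℝ × ℝ) :
    det2 b c • a - det2 a c • b + det2 a b • c = 0 := by
  ext <;> simp only [det2, Prod.fst_add, Prod.fst_sub, Prod.snd_add, Prod.snd_sub,
    Prod.smul_fst, Prod.smul_snd, smul_eq_mul, Prod.fst_zero, Prod.snd_zero] <;> ring

theorem fderiv_comp_deriv' {E F : Type*} [NormedAddCommGroup E] [NormedSpace ℝ E]
    [NormedAddCommGroup F] [NormedSpace ℝ F] {l : E → F} {f : ℝ → E} {x : ℝ}
    (hl : DifferentiableAt ℝ l (f x)) (hf : DifferentiableAt ℝ f x) :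
    deriv (fun s => l (f s)) x = fderiv ℝ l (f x) (deriv f x) :=
  fderiv_comp_deriv x hl hf

theorem C1_interface_condition_general (U : Set (ℝ × ℝ)) (hU : IsOpen U)
    (φ : ℝ × ℝ → ℝ) (hφ : ContDiffOn ℝ 1 φ U)
    (F F' : ℝ × ℝ → ℝ × ℝ) (hF : ContDiff ℝ 1 F) (hF' : ContDiff ℝ 1 F')
    (hFU : ∀ x : ℝ × ℝ, F x ∈ U)
    (hagree : ∀ ξ : ℝ, F (0, ξ) = F' (0, ξ))
    (g g' : ℝ × ℝ → ℝ) (hg : g = φ ∘ F) (hg' : g' = φ ∘ F') :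
    ∀ ξ : ℝ,
      det2 (deriv (fun s : ℝ => F' (s, ξ)) 0) (deriv (fun s : ℝ => F (0, s)) ξ)
          * deriv (fun s : ℝ => g (s, ξ)) 0
        - det2 (deriv (fun s : ℝ => F (s, ξ)) 0) (deriv (fun s : ℝ => F (0, s)) ξ)
          * deriv (fun s : ℝ => g' (s, ξ)) 0
        + det2 (deriv (fun s : ℝ => F (s, ξ)) 0) (deriv (fun s : ℝ => F' (s, ξ)) 0)
          * deriv (fun s : ℝ => g (0, s)) ξ = 0 := by
  intro ξ
  subst hg hg'
  have hφ₀ : DifferentiableAt ℝ φ (F (0, ξ)) :=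
    (hφ.differentiableOn one_ne_zero).differentiableAt (hU.mem_nhds (hFU _))
  have hFd : Differentiable ℝ F := hF.differentiable one_ne_zero
  have hF'd : Differentiable ℝ F' := hF'.differentiable one_ne_zero
  simp only [Function.comp_apply]
  rw [fderiv_comp_deriv' (f := fun s => F (s, ξ)) hφ₀ (by fun_prop),
    fderiv_comp_deriv' (f := fun s => F (0, s)) hφ₀ (by fun_prop),
    fderiv_comp_deriv' (f := fun s => F' (s, ξ)) (hagree ξ ▸ hφ₀) (by fun_prop), ← hagree ξ]
  simpa [smul_eq_mul] using
    congrArg (fderiv ℝ φ (F (0, ξ))) (det2_smul_sub_det2_smul_add_det2_smul _ _ _)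

/-- **Necessity of the C¹-smoothness condition (C1) across a common interface:**
if `φ` is `C¹` on an open set `U ⊆ ℝ²`, `F, F' : ℝ² → ℝ²` are `C¹` maps into `U` agreeing
on the line `{0} × ℝ`, and `g = φ ∘ F`, `g' = φ ∘ F'`, then for every `ξ ∈ ℝ`
`det[∂₁F'(0,ξ), ∂₂F(0,ξ)]·∂₁g(0,ξ) − det[∂₁F(0,ξ), ∂₂F(0,ξ)]·∂₁g'(0,ξ)
  + det[∂₁F(0,ξ), ∂₁F'(0,ξ)]·∂₂g(0,ξ) = 0`. -/
theorem C1_interface_condition (U : Set (ℝ × ℝ)) (hU : IsOpen U)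
    (φ : ℝ × ℝ → ℝ) (hφ : ContDiffOn ℝ 1 φ U)
    (F F' : ℝ × ℝ → ℝ × ℝ) (hF : ContDiff ℝ 1 F) (hF' : ContDiff ℝ 1 F')
    (hFU : ∀ x : ℝ × ℝ, F x ∈ U) (hF'U : ∀ x : ℝ × ℝ, F' x ∈ U)
    (hagree : ∀ ξ : ℝ, F (0, ξ) = F' (0, ξ))
    (g g' : ℝ × ℝ → ℝ) (hg : g = φ ∘ F) (hg' : g' = φ ∘ F') :
    ∀ ξ : ℝ,
      det2 (deriv (fun s : ℝ => F' (s, ξ)) 0) (deriv (fun s : ℝ => F (0, s)) ξ)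
          * deriv (fun s : ℝ => g (s, ξ)) 0
        - det2 (deriv (fun s : ℝ => F (s, ξ)) 0) (deriv (fun s : ℝ => F (0, s)) ξ)
          * deriv (fun s : ℝ => g' (s, ξ)) 0
        + det2 (deriv (fun s : ℝ => F (s, ξ)) 0) (deriv (fun s : ℝ => F' (s, ξ)) 0)
          * deriv (fun s : ℝ => g (0, s)) ξ = 0 :=
  C1_interface_condition_general U hU φ hφ F F' hF hF' hFU hagree g g' hg hg'
end

section
/- Let f : ℝ² → ℝ be twice continuously differentiable (of class C²) and suppose that at every point x of the frontier of the open unit square (0,1)×(0,1) one has f(x) = 0, Df(x) = 0 and D²f(x) = 0. Then the function h : ℝ² → ℝ defined by h(x) = f(x) for x in the closed unit square [0,1]×[0,1] and h(x) = 0 otherwise is twice continuously differentiable on ℝ². -/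
/-!
Away from the frontier of `K` the indicator `K.indicator f` agrees locally with `f` or with `0`,
so only frontier points need care. There, all derivatives of `f` up to the relevant order vanish,
so `K.indicator (D^m f)` is a Taylor series for `K.indicator f`: at a frontier point the
difference quotient of `K.indicator (D^m f)` is bounded by that of `D^m f` itself, whose
derivative is `0`.
-/

open Set Filter Topology Asymptotics

variable {𝕜 E F : Type*} [NontriviallyNormedField 𝕜] [NormedAddCommGroup E] [NormedSpace 𝕜 E]
  [NormedAddCommGroup F] [NormedSpace 𝕜 F] {K : Set E} {g : E → F}

theorem HasFDerivAt.indicator_of_eq_zero {x : E} (hg : HasFDerivAt g (0 : E →L[𝕜] F) x)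
    (hgx : g x = 0) : HasFDerivAt (K.indicator g) (0 : E →L[𝕜] F) x := by
  have hKx : K.indicator g x = 0 := indicator_apply_eq_zero.mpr fun _ ↦ hgx
  rw [hasFDerivAt_iff_isLittleO] at hg ⊢
  refine IsBigO.trans_isLittleO (isBigO_of_le _ fun y ↦ ?_) hg
  simpa [hKx, hgx] using norm_indicator_le_norm_self g y

theorem hasFDerivAt_indicator {g' : E → E →L[𝕜] F} (hg : ∀ x, HasFDerivAt g (g' x) x)
    (hK : ∀ x ∈ frontier K, g x = 0 ∧ g' x = 0) (x : E) :
    HasFDerivAt (K.indicator g) (K.indicator g' x) x := by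
  by_cases hx : x ∈ frontier K
  · obtain ⟨hgx, hg'x⟩ := hK x hx
    rw [indicator_apply_eq_zero.mpr fun _ ↦ hg'x]
    exact (hg'x ▸ hg x).indicator_of_eq_zero hgx
  rw [← mem_compl_iff, compl_frontier_eq_union_interior] at hx
  rcases hx with hx | hx
  · rw [indicator_of_mem (interior_subset hx)]
    exact (hg x).congr_of_eventuallyEq <|
      eqOn_indicator.eventuallyEq_of_mem (mem_interior_iff_mem_nhds.mp hx)
  · rw [indicator_of_notMem (interior_subset hx : x ∈ Kᶜ)]
    exact (hasFDerivAt_const 0 x).congr_of_eventuallyEq <|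
      eqOn_indicator'.eventuallyEq_of_mem (mem_interior_iff_mem_nhds.mp hx)

theorem ContDiff.indicator {n : ℕ∞} {f : E → F} (hf : ContDiff 𝕜 n f)
    (hK : ∀ x ∈ frontier K, ∀ m : ℕ, m ≤ n → iteratedFDeriv 𝕜 m f x = 0) :
    ContDiff 𝕜 n (K.indicator f) := by
  have hft := contDiff_iff_ftaylorSeries.mp hf
  have curryLeft_zero (m : ℕ) :
      (0 : ContinuousMultilinearMap 𝕜 (fun _ : Fin (m + 1) ↦ E) F).curryLeft = 0 := by
    ext; simp
  refine HasFTaylorSeriesUpTo.contDiff (f' := fun x m ↦ K.indicator (iteratedFDeriv 𝕜 m f) x)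
    ⟨fun x ↦ ?_, fun m hm x ↦ ?_, fun m hm ↦ ?_⟩
  · by_cases hx : x ∈ K <;> simp [hx]
  · have hm₀ : (m : ℕ∞) ≤ n := by exact_mod_cast hm.le
    have hm₁ : ((m + 1 : ℕ) : ℕ∞) ≤ n := by
      push_cast; exact Order.add_one_le_of_lt (by exact_mod_cast hm)
    refine (hasFDerivAt_indicator (hft.fderiv m hm) (fun y hy ↦
      ⟨hK y hy m hm₀, by
        change (iteratedFDeriv 𝕜 (m + 1) f y).curryLeft = 0
        rw [hK y hy (m + 1) hm₁, curryLeft_zero]⟩) x).congr_fderiv ?_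
    exact congrFun (indicator_comp_of_zero (curryLeft_zero m)) x
  · exact (hft.cont m hm).indicator fun y hy ↦ hK y hy m (by exact_mod_cast hm)

/-- **Zero extension of a C² function from the unit square:**
if `f : ℝ² → ℝ` is of class `C²` and its value, total derivative and second derivative
vanish at every point of the frontier of the open unit square `(0,1)×(0,1)`, then the
function `h` equal to `f` on the closed unit square `[0,1]×[0,1]` and `0` elsewhere is
twice continuously differentiable on `ℝ²`. -/
theorem C2_zero_extension_unit_square (f : ℝ × ℝ → ℝ) (hf : ContDiff ℝ 2 f)
    (hbd : ∀ x ∈ frontier ((Set.Ioo (0:ℝ) 1) ×ˢ (Set.Ioo (0:ℝ) 1)),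
      f x = 0 ∧ fderiv ℝ f x = 0 ∧ iteratedFDeriv ℝ 2 f x = 0)
    (h : ℝ × ℝ → ℝ)
    (hh : h = Set.indicator ((Set.Icc (0:ℝ) 1) ×ˢ (Set.Icc (0:ℝ) 1)) f) :
    ContDiff ℝ 2 h := by
  have hfr : frontier (Icc (0:ℝ) 1 ×ˢ Icc (0:ℝ) 1) = frontier (Ioo (0:ℝ) 1 ×ˢ Ioo (0:ℝ) 1) := by
    simp only [frontier_prod_eq, closure_Icc, closure_Ioo zero_ne_one, frontier_Icc zero_le_one,
      frontier_Ioo zero_lt_one]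
  subst hh
  refine hf.indicator (n := 2) fun x hx m hm ↦ ?_
  obtain ⟨h0, h1, h2⟩ := hbd x (hfr ▸ hx)
  have hm : m ≤ 2 := by exact_mod_cast hm
  interval_cases m
  · exact norm_eq_zero.mp (by simp [h0])
  · exact norm_eq_zero.mp (by simp [h1])
  · exact h2
end

section
/- Let p ≥ 6 and let i, j be integers with 3 ≤ i ≤ p−3 and 3 ≤ j ≤ p−3. Let b_m(ξ) = C(p,m)·ξ^m·(1−ξ)^{p−m} denote the Bernstein polynomial of degree p and index m, and define f(x, y) = b_i(x)·b_j(y). Then the function h : ℝ² → ℝ defined by h(x, y) = f(x, y) for (x, y) in the closed unit square [0,1]×[0,1] and h(x, y) = 0 otherwise is twice continuously differentiable on ℝ². -/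
/-!
On the unit square the function is `c · x^i (1-x)^(p-i) · y^j (1-y)^(p-j)`, and outside it the
zero extension coincides with the same expression written with truncated powers
`max x 0 ^ i`, `max (1 - x) 0 ^ (p - i)`, ... .  A truncated power `t ↦ max t 0 ^ n` is `C^k`
for every `k < n`, since its derivative is `n · max t 0 ^ (n - 1)`; here all exponents are
at least 3.
-/

open Set

lemma hasDerivAt_max_zero_pow {n : ℕ} (hn : n ≠ 0) (x : ℝ) :
    HasDerivAt (fun t : ℝ => max t 0 ^ (n + 1)) ((n + 1) * max x 0 ^ n) x := by
  rcases lt_trichotomy x 0 with hx | rfl | hx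
  · have hzero : (fun t : ℝ => max t 0 ^ (n + 1)) =ᶠ[nhds x] fun _ => 0 := by
      filter_upwards [Iio_mem_nhds hx] with t (ht : t < 0)
      simp [max_eq_right ht.le]
    simpa [max_eq_right hx.le, hn] using (hasDerivAt_const x (0 : ℝ)).congr_of_eventuallyEq hzero
  · have hleft : HasDerivWithinAt (fun t : ℝ => max t 0 ^ (n + 1)) 0 (Iic 0) 0 :=
      (hasDerivWithinAt_const 0 _ 0).congr (fun t ht => by simp [max_eq_right (mem_Iic.1 ht)])
        (by simp)
    have hright : HasDerivWithinAt (fun t : ℝ => max t 0 ^ (n + 1)) 0 (Ici 0) 0 := by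
      have hpow := (hasDerivAt_pow (n + 1) (0 : ℝ)).hasDerivWithinAt (s := Ici 0)
      rw [Nat.add_sub_cancel, zero_pow hn, mul_zero] at hpow
      exact hpow.congr (fun t ht => by simp [max_eq_left (mem_Ici.1 ht)]) (by simp)
    have hunion := hleft.union hright
    rw [Iic_union_Ici, hasDerivWithinAt_univ] at hunion
    simpa [hn] using hunion
  · have hpos : (fun t : ℝ => max t 0 ^ (n + 1)) =ᶠ[nhds x] fun t => t ^ (n + 1) := by
      filter_upwards [Ioi_mem_nhds hx] with t ht
      rw [max_eq_left ht.le]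
    simpa [max_eq_left hx.le] using (hasDerivAt_pow (n + 1) x).congr_of_eventuallyEq hpos

theorem contDiff_max_zero_pow {k n : ℕ} (hkn : k < n) :
    ContDiff ℝ k (fun t : ℝ => max t 0 ^ n) := by
  induction k generalizing n with
  | zero => exact contDiff_zero.2 ((continuous_id.max continuous_const).pow n)
  | succ k ih =>
    obtain ⟨m, rfl⟩ : ∃ m, n = m + 1 := ⟨n - 1, by omega⟩
    have hderiv := hasDerivAt_max_zero_pow (n := m) (by omega)
    rw [Nat.cast_succ, contDiff_succ_iff_deriv]
    refine ⟨fun x => (hderiv x).differentiableAt, by simp, ?_⟩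
    rw [funext fun x => (hderiv x).deriv]
    exact contDiff_const.mul (ih (by omega))

lemma indicator_Icc_mul_pow_mul_one_sub_pow (c : ℝ) {a b : ℕ} (ha : a ≠ 0) (hb : b ≠ 0) :
    (Icc 0 1).indicator (fun t : ℝ => c * t ^ a * (1 - t) ^ b) =
      fun t => c * max t 0 ^ a * max (1 - t) 0 ^ b := by
  ext t
  by_cases ht : t ∈ Icc (0 : ℝ) 1
  · rw [indicator_of_mem ht, max_eq_left ht.1, max_eq_left (sub_nonneg.2 ht.2)]
  · rw [indicator_of_notMem ht]
    rcases not_and_or.1 ht with ht | ht <;> push Not at ht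
    · simp [max_eq_right ht.le, ha]
    · simp [max_eq_right (sub_nonpos.2 ht.le), hb]

theorem contDiff_indicator_Icc_mul_pow_mul_one_sub_pow (c : ℝ) {k a b : ℕ} (ha : k < a)
    (hb : k < b) : ContDiff ℝ k ((Icc 0 1).indicator (fun t : ℝ => c * t ^ a * (1 - t) ^ b)) := by
  rw [indicator_Icc_mul_pow_mul_one_sub_pow c (by omega) (by omega)]
  exact (contDiff_const.mul (contDiff_max_zero_pow ha)).mul
    ((contDiff_max_zero_pow hb).comp (contDiff_const.sub contDiff_id))

lemma Set.indicator_prod_mul {ι κ M₀ : Type*} [MulZeroClass M₀] (s : Set ι) (t : Set κ)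
    (f : ι → M₀) (g : κ → M₀) :
    (s ×ˢ t).indicator (fun z => f z.1 * g z.2) =
      fun z => s.indicator f z.1 * t.indicator g z.2 := by
  ext ⟨x, y⟩
  simp only [indicator, mem_prod]
  split_ifs <;> simp_all

theorem C2_zero_extension_bernstein_general (p : ℕ)
    (i j : ℕ) (hi : 3 ≤ i) (hi' : i ≤ p - 3) (hj : 3 ≤ j) (hj' : j ≤ p - 3)
    (b : ℕ → ℝ → ℝ)
    (hb : ∀ (m : ℕ) (ξ : ℝ), b m ξ = (p.choose m : ℝ) * ξ ^ m * (1 - ξ) ^ (p - m))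
    (f : ℝ × ℝ → ℝ) (hf : ∀ x y : ℝ, f (x, y) = b i x * b j y)
    (h : ℝ × ℝ → ℝ)
    (hh : h = Set.indicator ((Set.Icc (0:ℝ) 1) ×ˢ (Set.Icc (0:ℝ) 1)) f) :
    ContDiff ℝ 2 h := by
  have hf' : f = fun z => b i z.1 * b j z.2 := funext fun ⟨x, y⟩ => hf x y
  rw [hh, hf', Set.indicator_prod_mul _ _ (b i) (b j), funext (hb i), funext (hb j)]
  have hx := contDiff_indicator_Icc_mul_pow_mul_one_sub_pow (p.choose i : ℝ) (k := 2)
    (a := i) (b := p - i) (by omega) (by omega)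
  have hy := contDiff_indicator_Icc_mul_pow_mul_one_sub_pow (p.choose j : ℝ) (k := 2)
    (a := j) (b := p - j) (by omega) (by omega)
  exact (hx.comp contDiff_fst).mul (hy.comp contDiff_snd)

/-- **Zero extension of interior tensor-product Bernstein basis functions is C²:**
for `p ≥ 6` and `3 ≤ i, j ≤ p-3`, the function equal to `b_i(x)·b_j(y)` (a product of
Bernstein polynomials of degree `p`) on the closed unit square `[0,1]×[0,1]` and `0`
elsewhere is twice continuously differentiable on `ℝ²`. -/
theorem C2_zero_extension_bernstein (p : ℕ) (hp : 6 ≤ p)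
    (i j : ℕ) (hi : 3 ≤ i) (hi' : i ≤ p - 3) (hj : 3 ≤ j) (hj' : j ≤ p - 3)
    (b : ℕ → ℝ → ℝ)
    (hb : ∀ (m : ℕ) (ξ : ℝ), b m ξ = (p.choose m : ℝ) * ξ ^ m * (1 - ξ) ^ (p - m))
    (f : ℝ × ℝ → ℝ) (hf : ∀ x y : ℝ, f (x, y) = b i x * b j y)
    (h : ℝ × ℝ → ℝ)
    (hh : h = Set.indicator ((Set.Icc (0:ℝ) 1) ×ˢ (Set.Icc (0:ℝ) 1)) f) :
    ContDiff ℝ 2 h :=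
  C2_zero_extension_bernstein_general p i j hi hi' hj hj' b hb f hf h hh
end
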